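/- arXiv:1001.0824 — 3 statements merged into one kernel-verified Lean document; each statement's English description precedes it below -/
import Mathlib

section
/- Let G = (V,E) be a finite undirected unweighted graph and let r, x, w, y ∈ V. Suppose that δ(w,y,x) = δ(w,y) (i.e., some shortest w–y path in G avoids x) and that δ(w,y) ≤ δ(r,y). Then δ(r,w,x) + δ(w,y) ≤ 3·δ(r,y,x) (as an inequality in ℕ∞). -/
open scoped ENNReal Classical

/-- The graph `G` with vertex `x` "failed": edges incident to `x` are removed,
so that walks in `G.avoid x` are exactly walks of `G` avoiding `x`
(for endpoints different from `x`). -/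
def SimpleGraph.avoid {V : Type*} (G : SimpleGraph V) (x : V) : SimpleGraph V where
  Adj a b := G.Adj a b ∧ a ≠ x ∧ b ≠ x
  symm := ⟨fun _ _ h => ⟨h.1.symm, h.2.2, h.2.1⟩⟩
  loopless := ⟨fun a h => G.loopless.irrefl a h.1⟩

/-- `δ(a,b,x)` : the distance (in `ℕ∞`) between `a` and `b` in `G − x`,
with the convention that it is `∞` if `a = x` or `b = x`. -/
noncomputable def davoid {V : Type*} (G : SimpleGraph V) (a b x : V) : ℕ∞ :=
  if a = x ∨ b = x then ⊤ else (G.avoid x).edist a b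

/-- `δ(v,B)` : distance from `v` to the set `B`. -/
noncomputable def dset {V : Type*} (G : SimpleGraph V) (v : V) (B : Set V) : ℕ∞ :=
  ⨅ w ∈ B, G.edist v w

/-- `δ(v,B,x)` : distance from `v` to the set `B` in `G − x`. -/
noncomputable def dsetAvoid {V : Type*} (G : SimpleGraph V) (v : V) (B : Set V) (x : V) : ℕ∞ :=
  ⨅ w ∈ B, davoid G v w x

/-- `Ball(v,A,B) = {w ∈ A : δ(v,w) < δ(v,B)}`. -/
def ball {V : Type*} (G : SimpleGraph V) (v : V) (A B : Set V) : Set V :=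
  {w ∈ A | G.edist v w < dset G v B}

/-- `Ball^x(v,A,B) = {w ∈ A : δ(v,w,x) < δ(v,B,x)}`. -/
def ballAvoid {V : Type*} (G : SimpleGraph V) (v : V) (A B : Set V) (x : V) : Set V :=
  {w ∈ A | davoid G v w x < dsetAvoid G v B x}

/-- `Ball^x(v,A,B,ε) = {w ∈ A : (1+ε)·δ(v,w,x) < δ(v,B,x)}`. -/
def ballTrunc {V : Type*} (G : SimpleGraph V) (v : V) (A B : Set V) (x : V) (ε : ℝ) : Set V :=
  {w ∈ A | ENNReal.ofReal (1 + ε) * (davoid G v w x : ℝ≥0∞) < (dsetAvoid G v B x : ℝ≥0∞)}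

/-- `C^x(w,A,B,ε) = {v ∈ V : (1+ε)·δ(v,w,x) < δ(v,B,x)}`. -/
def clusterTrunc {V : Type*} (G : SimpleGraph V) (w : V) (B : Set V) (x : V) (ε : ℝ) : Set V :=
  {v | ENNReal.ofReal (1 + ε) * (davoid G v w x : ℝ≥0∞) < (dsetAvoid G v B x : ℝ≥0∞)}

/- One shortest `w`–`y` path survives the failure of `x`, so going from `r` to `y` in
`G − x` and then back along it reaches `w` within `δ(r,y,x) + δ(w,y)`; and
`δ(w,y) ≤ δ(r,y) ≤ δ(r,y,x)`. -/

lemma SimpleGraph.avoid_le {V : Type*} (G : SimpleGraph V) (x : V) : G.avoid x ≤ G :=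
  fun _ _ h => h.1

section davoid

variable {V : Type*} (G : SimpleGraph V)

lemma edist_le_davoid (a b x : V) : G.edist a b ≤ davoid G a b x := by
  unfold davoid
  split
  · exact le_top
  · exact SimpleGraph.edist_anti (G.avoid_le x)

lemma davoid_comm (a b x : V) : davoid G a b x = davoid G b a x := by
  unfold davoid
  simp_rw [SimpleGraph.edist_comm, or_comm]

lemma davoid_triangle (a b c x : V) :
    davoid G a c x ≤ davoid G a b x + davoid G b c x := by
  unfold davoid
  by_cases ha : a = x
  · simp [ha]
  by_cases hb : b = x
  · simp [hb]
  by_cases hc : c = x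
  · simp [hc]
  simp only [ha, hb, hc, or_self, if_false]
  exact SimpleGraph.edist_triangle

end davoid

theorem stmt0_general {V : Type*} (G : SimpleGraph V) (r x w y : V)
    (h1 : davoid G w y x = G.edist w y)
    (h2 : G.edist w y ≤ G.edist r y) :
    davoid G r w x + G.edist w y ≤ 3 * davoid G r y x := by
  have hrw : davoid G r w x ≤ davoid G r y x + G.edist w y := by
    rw [← h1, davoid_comm G w y x]
    exact davoid_triangle G r y w x
  have hwy : G.edist w y ≤ davoid G r y x := h2.trans (edist_le_davoid G r y x)
  calc davoid G r w x + G.edist w y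
      ≤ davoid G r y x + G.edist w y + G.edist w y := by gcongr
    _ ≤ davoid G r y x + davoid G r y x + davoid G r y x := by gcongr
    _ = 3 * davoid G r y x := by ring

/-- if some shortest `w`–`y` path avoids `x` (i.e. `δ(w,y,x) = δ(w,y)`)
and `δ(w,y) ≤ δ(r,y)`, then `δ(r,w,x) + δ(w,y) ≤ 3·δ(r,y,x)`. -/
theorem stmt0 {V : Type*} [Fintype V] (G : SimpleGraph V) (r x w y : V)
    (h1 : davoid G w y x = G.edist w y)
    (h2 : G.edist w y ≤ G.edist r y) :
    davoid G r w x + G.edist w y ≤ 3 * davoid G r y x :=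
  stmt0_general G r x w y h1 h2
end

section
/- Let G = (V,E) be a finite undirected unweighted graph, let Q be a shortest path in G from r to y, and let x be an internal vertex of Q (x ≠ r, x ≠ y). Suppose r and y are connected in G−x. Then there exist vertices a and b on Q, with a appearing strictly before x and b appearing strictly after x in the order along Q from r to y, and a path p from a to b in G−x whose set of common vertices with the segment of Q from a to b is exactly {a, b}, such that the concatenation of the prefix of Q from r to a, then p, then the suffix of Q from b to y, is a path from r to y in G−x of length δ(r,y,x). -/
/-!
Take a shortest `r`–`y` path `P` in `G − x`. Reading `P` backwards from `y`, let `a` be the first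
vertex lying on `Q` before `x`; reading on from `a`, let `b` be the first vertex lying on `Q` after
`x`. The piece `p` of `P` from `a` to `b` meets `Q` only in `a` and `b`, since it avoids `x`.
Subpaths of the shortest path `Q` are shortest, so the prefix of `Q` up to `a` and its suffix from
`b` are no longer than the corresponding pieces of `P`. Splicing them with `p` therefore gives an
`r`–`y` walk in `G − x` no longer than `P`, hence a shortest one, hence a path.
-/

open scoped ENNReal Classical

theorem List.IsSuffix.mem_iff_le_idxOf {α : Type*} [DecidableEq α] {l₁ l₂ : List α} {a : α}
    (hl : l₁ <:+ l₂) (hn : l₂.Nodup) (ha : a ∈ l₂) :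
    a ∈ l₁ ↔ l₂.length - l₁.length ≤ l₂.idxOf a := by
  obtain ⟨l₃, rfl⟩ := hl
  rw [List.nodup_append] at hn
  by_cases h₃ : a ∈ l₃
  · have := List.idxOf_lt_length_of_mem h₃
    simp only [List.idxOf_append_of_mem h₃, List.length_append]
    constructor
    · intro h; exact absurd rfl (hn.2.2 a h₃ a h)
    · omega
  · have h₁ : a ∈ l₁ := by simpa [h₃] using ha
    simp only [List.idxOf_append_of_notMem h₃, List.length_append, h₁, true_iff]
    omega

namespace SimpleGraph

variable {V : Type*} {G : SimpleGraph V}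

lemma avoid_le_s4 (G : SimpleGraph V) (x : V) : G.avoid x ≤ G := fun _ _ h => h.1

lemma davoid_eq_dist {r y x : V} (hr : r ≠ x) (hy : y ≠ x) (h : (G.avoid x).Reachable r y) :
    davoid G r y x = (G.avoid x).dist r y := by
  rw [davoid, if_neg (by tauto), h.coe_dist_eq_edist]

namespace Walk

lemma notMem_support_of_avoid {x u v : V} (p : (G.avoid x).Walk u v) (hu : u ≠ x) :
    x ∉ p.support := by
  induction p with
  | nil => simpa using hu.symm
  | cons h _ ih => simpa [hu.symm] using ih h.2.2

lemma edges_subset_edgeSet_avoid {x u v : V} (p : G.Walk u v) (hx : x ∉ p.support) :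
    ∀ e ∈ p.edges, e ∈ (G.avoid x).edgeSet := by
  intro e he
  induction e using Sym2.ind with
  | _ a b =>
    refine ⟨p.edges_subset_edgeSet he, ?_, ?_⟩
    · rintro rfl; exact hx (p.fst_mem_support_of_mem_edges he)
    · rintro rfl; exact hx (p.snd_mem_support_of_mem_edges he)

lemma length_takeUntil_le_of_length_eq_dist [DecidableEq V] {u v w : V} {p : G.Walk u v}
    (hp : p.length = G.dist u v) (h : w ∈ p.support) (q : G.Walk u w) :
    (p.takeUntil w h).length ≤ q.length :=
  (length_eq_dist_of_subwalk hp (p.isSubwalk_takeUntil h)).trans_le (dist_le q)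

lemma length_dropUntil_le_of_length_eq_dist [DecidableEq V] {u v w : V} {p : G.Walk u v}
    (hp : p.length = G.dist u v) (h : w ∈ p.support) (q : G.Walk w v) :
    (p.dropUntil w h).length ≤ q.length :=
  (length_eq_dist_of_subwalk hp (p.isSubwalk_dropUntil h)).trans_le (dist_le q)

section idxOf

variable [DecidableEq V] {u v a z : V}

lemma idxOf_start_support (p : G.Walk u v) : p.support.idxOf u = 0 := by
  rw [← p.cons_tail_support]; exact List.idxOf_cons_self

lemma mem_support_takeUntil_iff (p : G.Walk u v) (ha : a ∈ p.support) :
    z ∈ (p.takeUntil a ha).support ↔ p.support.idxOf z ≤ p.support.idxOf a := by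
  rw [(p.support_takeUntil_prefix_support ha).mem_iff_idxOf_lt_length, length_support,
    length_takeUntil, Nat.lt_succ_iff]

lemma IsPath.mem_support_dropUntil_iff {p : G.Walk u v} (hp : p.IsPath) (ha : a ∈ p.support)
    (hz : z ∈ p.support) :
    z ∈ (p.dropUntil a ha).support ↔ p.support.idxOf a ≤ p.support.idxOf z := by
  have ha' := List.idxOf_lt_length_of_mem ha
  rw [length_support] at ha'
  rw [(p.support_dropUntil_suffix_support ha).mem_iff_le_idxOf hp.support_nodup hz,
    length_support, length_support, length_dropUntil]
  omega

end idxOf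

section verticesBefore

variable [DecidableEq V] {r y x z : V}

def verticesBefore (Q : G.Walk r y) (x : V) : Finset V :=
  Q.support.toFinset.filter fun z => Q.support.idxOf z < Q.support.idxOf x

def verticesAfter (Q : G.Walk r y) (x : V) : Finset V :=
  Q.support.toFinset.filter fun z => Q.support.idxOf x < Q.support.idxOf z

@[simp]
lemma mem_verticesBefore {Q : G.Walk r y} :
    z ∈ Q.verticesBefore x ↔ z ∈ Q.support ∧ Q.support.idxOf z < Q.support.idxOf x := by
  simp [verticesBefore]

@[simp]
lemma mem_verticesAfter {Q : G.Walk r y} :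
    z ∈ Q.verticesAfter x ↔ z ∈ Q.support ∧ Q.support.idxOf x < Q.support.idxOf z := by
  simp [verticesAfter]

lemma start_mem_verticesBefore (Q : G.Walk r y) (hx : x ∈ Q.support) (hxr : x ≠ r) :
    r ∈ Q.verticesBefore x := by
  have hne := (List.idxOf_inj hx).not.2 hxr
  exact mem_verticesBefore.2 ⟨Q.start_mem_support, by rw [idxOf_start_support] at hne ⊢; lia⟩

lemma IsPath.end_mem_verticesAfter {Q : G.Walk r y} (hQ : Q.IsPath) (hx : x ∈ Q.support)
    (hxy : x ≠ y) : y ∈ Q.verticesAfter x := by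
  have hne := (List.idxOf_inj hx).not.2 hxy
  have hle := (hQ.mem_support_dropUntil_iff hx Q.end_mem_support).1
    (Q.dropUntil x hx).end_mem_support
  exact mem_verticesAfter.2 ⟨Q.end_mem_support, lt_of_le_of_ne hle hne⟩

lemma mem_verticesBefore_or_eq_or_mem_verticesAfter (Q : G.Walk r y) (hz : z ∈ Q.support) :
    z ∈ Q.verticesBefore x ∨ z = x ∨ z ∈ Q.verticesAfter x := by
  rcases lt_trichotomy (Q.support.idxOf z) (Q.support.idxOf x) with h | h | h
  · exact .inl (mem_verticesBefore.2 ⟨hz, h⟩)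
  · exact .inr (.inl ((List.idxOf_inj hz).1 h))
  · exact .inr (.inr (mem_verticesAfter.2 ⟨hz, h⟩))

end verticesBefore

theorem IsPath.exists_segment [DecidableEq V] {u v : V} {p : G.Walk u v} (hp : p.IsPath)
    (S T : Finset V) (hu : u ∈ S) (hv : v ∈ T) :
    ∃ a ∈ S, ∃ b ∈ T, ∃ (p₁ : G.Walk u a) (q : G.Walk a b) (p₃ : G.Walk b v),
      q.IsPath ∧ (∀ z ∈ S, z ∈ q.support → z = a) ∧ (∀ z ∈ T, z ∈ q.support → z = b) ∧
      p₁.length + q.length + p₃.length = p.length := by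
  -- `a` is the last vertex of `p` in `S`, i.e. the first one met along `p.reverse`.
  obtain ⟨a, haS, ha, ha_first⟩ :=
    p.reverse.exists_mem_support_forall_mem_support_imp_eq S ⟨u, by simp [hu]⟩
  set r := (p.reverse.takeUntil a ha).reverse
  obtain ⟨b, hbT, hb, hb_first⟩ :=
    r.exists_mem_support_forall_mem_support_imp_eq T ⟨v, by simp [r, hv]⟩
  refine ⟨a, haS, b, hbT, (p.reverse.dropUntil a ha).reverse, r.takeUntil b hb,
    r.dropUntil b hb, (hp.reverse.takeUntil ha).reverse.takeUntil hb,
    fun z hzS hz => ?_, fun z hzT hz => ?_, ?_⟩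
  · refine ha_first z hzS ?_
    simpa [r] using r.support_takeUntil_subset_support hb hz
  · exact hb_first z hzT hz
  · have h₁ := congrArg length (p.reverse.take_spec ha)
    have h₂ := congrArg length (r.take_spec hb)
    simp only [length_append, length_reverse, r] at h₁ h₂ ⊢
    omega

lemma setOf_mem_support_inter_eq_pair {G' : SimpleGraph V} {a b : V} (p : G.Walk a b)
    (q : G'.Walk a b) (h : ∀ z ∈ p.support, z ∈ q.support → z = a ∨ z = b) :
    {z | z ∈ p.support} ∩ {z | z ∈ q.support} = {a, b} := by
  ext z
  constructor
  · exact fun ⟨hp, hq⟩ => h z hp hq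
  · rintro (rfl | rfl)
    · exact ⟨p.start_mem_support, q.start_mem_support⟩
    · exact ⟨p.end_mem_support, q.end_mem_support⟩

theorem exists_isPath_splice_avoid [DecidableEq V] {r y a b x : V} {Q : G.Walk r y}
    (hQ : Q.length = G.dist r y) (ha : a ∈ Q.support) (hb : b ∈ Q.support)
    (hxa : x ∉ (Q.takeUntil a ha).support) (hxb : x ∉ (Q.dropUntil b hb).support)
    (p₁ : (G.avoid x).Walk r a) (p : (G.avoid x).Walk a b) (p₃ : (G.avoid x).Walk b y)
    (hlen : p₁.length + p.length + p₃.length ≤ (G.avoid x).dist r y) :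
    ∃ W : (G.avoid x).Walk r y, W.IsPath ∧ W.length = (G.avoid x).dist r y ∧
      W.support =
        (Q.takeUntil a ha).support ++ p.support.tail ++ (Q.dropUntil b hb).support.tail := by
  let W := ((Q.takeUntil a ha).transfer _ (edges_subset_edgeSet_avoid _ hxa)).append
    (p.append ((Q.dropUntil b hb).transfer _ (edges_subset_edgeSet_avoid _ hxb)))
  have hW : W.length = (G.avoid x).dist r y := by
    refine le_antisymm ?_ (dist_le W)
    have h₁ := length_takeUntil_le_of_length_eq_dist hQ ha (p₁.mapLe (G.avoid_le_s4 x))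
    have h₃ := length_dropUntil_le_of_length_eq_dist hQ hb (p₃.mapLe (G.avoid_le_s4 x))
    simp only [W, length_append, length_transfer, length_mapLe] at h₁ h₃ ⊢
    omega
  refine ⟨W, W.isPath_of_length_eq_dist hW, hW, ?_⟩
  simp [W, support_append]

end Walk

end SimpleGraph

open SimpleGraph Walk

theorem stmt4_general {V : Type*} [DecidableEq V] (G : SimpleGraph V) (r y x : V)
    (Q : G.Walk r y) (hQlen : (Q.length : ℕ∞) = G.edist r y)
    (hxQ : x ∈ Q.support) (hxr : x ≠ r) (hxy : x ≠ y)
    (hconn : (G.avoid x).Reachable r y) :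
    ∃ (a b : V) (ha : a ∈ Q.support) (hb : b ∈ Q.support)
      (hab : b ∈ (Q.dropUntil a ha).support)
      (p : (G.avoid x).Walk a b),
      Q.support.idxOf a < Q.support.idxOf x ∧
      Q.support.idxOf x < Q.support.idxOf b ∧
      p.IsPath ∧
      {z | z ∈ p.support} ∩ {z | z ∈ ((Q.dropUntil a ha).takeUntil b hab).support}
        = {a, b} ∧
      ∃ W : (G.avoid x).Walk r y, W.IsPath ∧ (W.length : ℕ∞) = davoid G r y x ∧
        W.support
          = (Q.takeUntil a ha).support ++ p.support.tail
              ++ ((Q.dropUntil b hb).support).tail := by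
  have hQ : Q.length = G.dist r y := by
    exact_mod_cast hQlen.trans Q.reachable.coe_dist_eq_edist.symm
  have hQpath : Q.IsPath := Q.isPath_of_length_eq_dist hQ
  obtain ⟨P, hPpath, hPlen⟩ := hconn.exists_path_of_dist
  obtain ⟨a, haS, b, hbT, P₁, p, P₃, hp, hpS, hpT, hlen⟩ := hPpath.exists_segment
    (Q.verticesBefore x) (Q.verticesAfter x) (Q.start_mem_verticesBefore hxQ hxr)
    (hQpath.end_mem_verticesAfter hxQ hxy)
  obtain ⟨ha, hax⟩ := mem_verticesBefore.1 haS
  obtain ⟨hb, hxb⟩ := mem_verticesAfter.1 hbT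
  have hab : b ∈ (Q.dropUntil a ha).support :=
    (hQpath.mem_support_dropUntil_iff ha hb).2 (by omega)
  have hxp : x ∉ p.support := p.notMem_support_of_avoid (by rintro rfl; omega)
  have hpQ : ∀ z ∈ p.support, z ∈ ((Q.dropUntil a ha).takeUntil b hab).support →
      z = a ∨ z = b := by
    intro z hzp hzq
    have hzQ := Q.support_dropUntil_subset_support ha (support_takeUntil_subset_support _ hab hzq)
    rcases Q.mem_verticesBefore_or_eq_or_mem_verticesAfter (x := x) hzQ with h | rfl | h
    · exact .inl (hpS z h hzp)
    · exact absurd hzp hxp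
    · exact .inr (hpT z h hzp)
  obtain ⟨W, hW, hWlen, hWsupp⟩ := exists_isPath_splice_avoid hQ ha hb
    (fun h => by have := (Q.mem_support_takeUntil_iff ha).1 h; omega)
    (fun h => by have := (hQpath.mem_support_dropUntil_iff hb hxQ).1 h; omega)
    P₁ p P₃ (hlen.trans hPlen).le
  refine ⟨a, b, ha, hb, hab, p, hax, hxb, hp, setOf_mem_support_inter_eq_pair p _ hpQ,
    W, hW, ?_, hWsupp⟩
  rw [davoid_eq_dist hxr.symm hxy.symm hconn, hWlen]

/-- structure of detours: if `Q` is a shortest `r`–`y` path, `x` an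
internal vertex of `Q`, and `r`, `y` are connected in `G − x`, then there are
vertices `a` (strictly before `x` on `Q`) and `b` (strictly after `x` on `Q`) and a
path `p` from `a` to `b` in `G − x` meeting the segment of `Q` from `a` to `b`
exactly in `{a,b}`, such that prefix-of-`Q` ++ `p` ++ suffix-of-`Q` is a path from
`r` to `y` in `G − x` of length `δ(r,y,x)`. -/
theorem stmt4 {V : Type*} [Fintype V] [DecidableEq V] (G : SimpleGraph V) (r y x : V)
    (Q : G.Walk r y) (hQ : Q.IsPath) (hQlen : (Q.length : ℕ∞) = G.edist r y)
    (hxQ : x ∈ Q.support) (hxr : x ≠ r) (hxy : x ≠ y)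
    (hconn : (G.avoid x).Reachable r y) :
    ∃ (a b : V) (ha : a ∈ Q.support) (hb : b ∈ Q.support)
      (hab : b ∈ (Q.dropUntil a ha).support)
      (p : (G.avoid x).Walk a b),
      Q.support.idxOf a < Q.support.idxOf x ∧
      Q.support.idxOf x < Q.support.idxOf b ∧
      p.IsPath ∧
      {z | z ∈ p.support} ∩ {z | z ∈ ((Q.dropUntil a ha).takeUntil b hab).support}
        = {a, b} ∧
      ∃ W : (G.avoid x).Walk r y, W.IsPath ∧ (W.length : ℕ∞) = davoid G r y x ∧
        W.support
          = (Q.takeUntil a ha).support ++ p.support.tail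
              ++ ((Q.dropUntil b hb).support).tail :=
  stmt4_general G r y x Q hQlen hxQ hxr hxy hconn
end

section
/- Let G = (V,E) be a finite undirected unweighted graph, let v, w, x₁, x₂ ∈ V, let B ⊆ V, and let ε > 0 be a real number. Suppose that some shortest v–w path in G−x₁ (a path in G−x₁ of length δ(v,w,x₁)) avoids x₂, that δ(v,w,x₂) ≥ δ(v,B,x₂), and that δ(v,B,x₁) ≤ (1+ε)·δ(v,B,x₂). Then (1+ε)·δ(v,w,x₁) ≥ δ(v,B,x₁); in particular, for any A ⊆ V, w ∉ Ball^{x₁}(v,A,B,ε). -/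
open scoped ENNReal Classical

/-!
The shortest `v`–`w` path of `G − x₁` avoids `x₂`, so it is also a path of `G − x₂`; hence
`δ(v,B,x₂) ≤ δ(v,w,x₂) ≤ δ(v,w,x₁)`, and multiplying by `1 + ε` and using the third
hypothesis gives `δ(v,B,x₁) ≤ (1+ε)·δ(v,w,x₁)`.
-/

namespace SimpleGraph

variable {V : Type*} {G : SimpleGraph V}

def Walk.transferAvoid {x₁ x₂ a b : V} (p : (G.avoid x₁).Walk a b) (h : x₂ ∉ p.support) :
    (G.avoid x₂).Walk a b :=
  p.transfer (G.avoid x₂) fun e he => by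
    induction e using Sym2.ind with
    | _ c d =>
      have hcd : (G.avoid x₁).Adj c d := p.adj_of_mem_edges he
      exact ⟨hcd.1, fun hc => h (hc ▸ p.fst_mem_support_of_mem_edges he),
        fun hd => h (hd ▸ p.snd_mem_support_of_mem_edges he)⟩

theorem davoid_le_length_of_notMem_support {x₁ x₂ a b : V} (p : (G.avoid x₁).Walk a b)
    (h : x₂ ∉ p.support) : davoid G a b x₂ ≤ p.length := by
  have ha : a ≠ x₂ := fun ha => h (ha ▸ p.start_mem_support)
  have hb : b ≠ x₂ := fun hb => h (hb ▸ p.end_mem_support)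
  rw [davoid, if_neg (not_or.mpr ⟨ha, hb⟩)]
  simpa [Walk.transferAvoid] using (p.transferAvoid h).edist_le

end SimpleGraph

theorem stmt9_general {V : Type*} (G : SimpleGraph V) (v w x₁ x₂ : V)
    (B : Set V) (ε : ℝ)
    (h1 : ∃ p : (G.avoid x₁).Walk v w, p.IsPath ∧ (p.length : ℕ∞) = davoid G v w x₁ ∧
      x₂ ∉ p.support)
    (h2 : dsetAvoid G v B x₂ ≤ davoid G v w x₂)
    (h3 : (dsetAvoid G v B x₁ : ℝ≥0∞)
      ≤ ENNReal.ofReal (1 + ε) * (dsetAvoid G v B x₂ : ℝ≥0∞)) :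
    (dsetAvoid G v B x₁ : ℝ≥0∞) ≤ ENNReal.ofReal (1 + ε) * (davoid G v w x₁ : ℝ≥0∞) ∧
    ∀ A : Set V, w ∉ ballTrunc G v A B x₁ ε := by
  obtain ⟨p, -, hlen, hx₂⟩ := h1
  have hd : davoid G v w x₂ ≤ davoid G v w x₁ :=
    hlen ▸ SimpleGraph.davoid_le_length_of_notMem_support p hx₂
  have key : (dsetAvoid G v B x₁ : ℝ≥0∞) ≤ ENNReal.ofReal (1 + ε) * (davoid G v w x₁ : ℝ≥0∞) :=
    h3.trans (mul_le_mul_right (by exact_mod_cast h2.trans hd) _)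
  exact ⟨key, fun A hw => (not_le.mpr hw.2) key⟩

/-- if some shortest `v`–`w` path in `G − x₁` avoids `x₂`,
`δ(v,w,x₂) ≥ δ(v,B,x₂)`, and `δ(v,B,x₁) ≤ (1+ε)·δ(v,B,x₂)`, then
`(1+ε)·δ(v,w,x₁) ≥ δ(v,B,x₁)`; in particular `w ∉ Ball^{x₁}(v,A,B,ε)` for any `A`. -/
theorem stmt9 {V : Type*} [Fintype V] (G : SimpleGraph V) (v w x₁ x₂ : V)
    (B : Set V) (ε : ℝ) (hε : 0 < ε)
    (h1 : ∃ p : (G.avoid x₁).Walk v w, p.IsPath ∧ (p.length : ℕ∞) = davoid G v w x₁ ∧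
      x₂ ∉ p.support)
    (h2 : dsetAvoid G v B x₂ ≤ davoid G v w x₂)
    (h3 : (dsetAvoid G v B x₁ : ℝ≥0∞)
      ≤ ENNReal.ofReal (1 + ε) * (dsetAvoid G v B x₂ : ℝ≥0∞)) :
    (dsetAvoid G v B x₁ : ℝ≥0∞) ≤ ENNReal.ofReal (1 + ε) * (davoid G v w x₁ : ℝ≥0∞) ∧
    ∀ A : Set V, w ∉ ballTrunc G v A B x₁ ε :=
  stmt9_general G v w x₁ x₂ B ε h1 h2 h3
end
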